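/- Let N ≥ 3 be an integer, R > 0, 1 < q < 2; suppose f satisfies (F1)–(F3) and b satisfies (B). Then there exist λ*(R) > 0 and ρ₊(R) > 0 such that for every λ ∈ (0, λ*(R)): I_λ^+(u) ≥ ρ₊(R)²/8 for every u ∈ 𝒜 with ‖u‖ = ρ₊(R); moreover there exists ρ₋(λ,R) ∈ (0, ρ₊(R)) such that I_λ^+(u) ≥ ρ₋(λ,R)²/8 for every u with ρ₋(λ,R) ≤ ‖u‖ ≤ ρ₊(R), and ρ₋(λ,R) → 0 as λ → 0. The same statements hold for I_λ^−. -/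

import Mathlib

/-!
On `K` one has `|u| ≤ R`, `Ψ(u) ≥ ‖u‖²/2` and the radial Hardy-type bound
`u(r)² (N-2) r^(N-2) ≤ ‖u‖²`. By (F2) `|F^±(r,s)| ≤ ε s²` for `|s| ≤ δ`, and by (F1)
`|F^±(r,s)| ≤ M R` for `|s| ≤ R`. Where `‖u‖² ≤ δ² (N-2) r^(N-2)` the Hardy bound gives
`|u(r)| ≤ δ`; elsewhere it gives `r^(N-1) ≤ r ‖u‖² / (δ² (N-2))`, and if
`‖u‖² ≤ ρ₊² := δ² (N-2) t^(N-2)` this only happens for `r < t`. Integrating,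
`∫ r^(N-1) F^±(r,u) ≤ (ε R² + M R t²/δ²) ‖u‖² / (2(N-2)) ≤ ‖u‖²/8` for small `ε` and `t`,
while the sublinear term is at most a constant `κ λ` since `|u| ≤ R`. So
`I_λ^±(u) ≥ 3‖u‖²/8 - κ λ ≥ ‖u‖²/8` on the annulus `4κλ ≤ ‖u‖² ≤ ρ₊²`, and one takes
`ρ₋(λ) = √(4κλ)` and `λ* = ρ₊²/(4κ)`.
-/

open MeasureTheory Set Filter
open scoped Classical

noncomputable section

/-- The space 𝒜 of functions `u ∈ W^{1,1}_loc((0,R])` (modelled here by functions that are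
differentiable on `(0,R]` with derivative `d`) such that `∫₀^R r^{N-1} |u'|² dr < ∞`
and `u(R) = 0`. -/
structure SpaceA (N : ℕ) (R : ℝ) where
  u : ℝ → ℝ
  d : ℝ → ℝ
  hasDeriv : ∀ r ∈ Set.Ioc (0 : ℝ) R, HasDerivAt u (d r) r
  sq_integrable : MeasureTheory.IntegrableOn (fun r : ℝ => r ^ (N - 1) * d r ^ 2) (Set.Ioo 0 R)
  boundary : u R = 0

namespace SpaceA

variable {N : ℕ} {R : ℝ}

/-- Membership in `K = {u ∈ 𝒜 : ‖u'‖_∞ ≤ 1}`. -/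
def inK (w : SpaceA N R) : Prop := ∀ r ∈ Set.Ioo (0 : ℝ) R, |w.d r| ≤ 1

/-- `‖u‖² = ∫₀^R r^{N-1}|u'|² dr`. -/
def normSq (w : SpaceA N R) : ℝ := ∫ r in Set.Ioo (0 : ℝ) R, r ^ (N - 1) * w.d r ^ 2

/-- The distance in `𝒜`. -/
def distA (w v : SpaceA N R) : ℝ :=
  Real.sqrt (∫ r in Set.Ioo (0 : ℝ) R, r ^ (N - 1) * (w.d r - v.d r) ^ 2)

/-- The (real-valued) functional `Ψ(u) = ∫₀^R r^{N-1}(1 - √(1-|u'|²)) dr` (used on `K`). -/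
def PsiR (w : SpaceA N R) : ℝ :=
  ∫ r in Set.Ioo (0 : ℝ) R, r ^ (N - 1) * (1 - Real.sqrt (1 - w.d r ^ 2))

/-- The extended-real-valued functional `Ψ`, equal to `+∞` off `K`. -/
def PsiE (w : SpaceA N R) : EReal := if w.inK then ((w.PsiR : ℝ) : EReal) else ⊤

def isPos (w : SpaceA N R) : Prop := ∀ r ∈ Set.Ioo (0 : ℝ) R, 0 < w.u r

def isNeg (w : SpaceA N R) : Prop := ∀ r ∈ Set.Ioo (0 : ℝ) R, w.u r < 0

end SpaceA

variable {N : ℕ} {R : ℝ}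

/-- `F(r,s) = ∫₀ˢ f(r,t) dt`. -/
def Fint (f : ℝ → ℝ → ℝ) (r s : ℝ) : ℝ := ∫ t in (0 : ℝ)..s, f r t

/-- (F1) continuity of `f`. -/
def hypF1 (R : ℝ) (f : ℝ → ℝ → ℝ) : Prop :=
  ContinuousOn (fun p : ℝ × ℝ => f p.1 p.2) (Set.Icc 0 R ×ˢ Set.Icc (-R) R)

/-- (F2) `f(r,s)/s → 0` as `s → 0`, uniformly in `r`. -/
def hypF2 (R : ℝ) (f : ℝ → ℝ → ℝ) : Prop :=
  ∀ ε > (0 : ℝ), ∃ δ > (0 : ℝ), ∀ r ∈ Set.Icc (0 : ℝ) R, ∀ s : ℝ, s ≠ 0 → |s| < δ →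
    |f r s / s| < ε

/-- (F3) sign condition. -/
def hypF3 (R : ℝ) (f : ℝ → ℝ → ℝ) : Prop :=
  ∀ r ∈ Set.Icc (0 : ℝ) R, ∀ s : ℝ, s ≠ 0 → |s| ≤ R → 0 < s * f r s

/-- (F4) superlinearity with the quantitative bound. -/
def hypF4 (N : ℕ) (R : ℝ) (f : ℝ → ℝ → ℝ) : Prop :=
  ∃ θ : ℝ, 2 < θ ∧ ∃ a₁ : ℝ, 0 < a₁ ∧ ∃ a₂ : ℝ, 0 ≤ a₂ ∧
    (∀ r ∈ Set.Icc (0 : ℝ) R, ∀ s ∈ Set.Icc (-R) R, a₁ * |s| ^ θ - a₂ ≤ Fint f r s) ∧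
    (1 + a₂) / (N : ℝ) -
        a₁ * R ^ θ *
          (Real.Gamma (N : ℝ) * Real.Gamma (θ + 1) / Real.Gamma ((N : ℝ) + θ + 1)) ≤ -1

/-- (F5) quasi-evenness of `F` near `0`. -/
def hypF5 (R : ℝ) (f : ℝ → ℝ → ℝ) : Prop :=
  ∃ σ : ℝ, 0 < σ ∧ ∃ θb : ℝ, 4 < θb ∧
    ∀ r ∈ Set.Icc (0 : ℝ) R, ∀ s ∈ Set.Icc (-σ) σ,
      |Fint f r (-s) - Fint f r s| ≤ |s| ^ θb

/-- (F6) `f ∈ C¹` together with a growth bound on `∂ₛf` near `s = 0`. -/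
def hypF6 (R : ℝ) (f : ℝ → ℝ → ℝ) : Prop :=
  ContDiffOn ℝ 1 (fun p : ℝ × ℝ => f p.1 p.2) (Set.Icc 0 R ×ˢ Set.Icc (-R) R) ∧
  ∃ σ : ℝ, 0 < σ ∧ ∃ θt : ℝ, 2 < θt ∧ ∃ c : ℝ, 0 < c ∧
    ∀ r ∈ Set.Icc (0 : ℝ) R, ∀ s ∈ Set.Icc (-σ) σ,
      |deriv (fun t => f r t) s| ≤ c * |s| ^ (θt - 2)

/-- (B) the weight `b` is continuous and pinched between positive constants. -/
def hypB (R : ℝ) (b : ℝ → ℝ) : Prop :=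
  ContinuousOn b (Set.Icc 0 R) ∧
    ∃ b₀ b₁ : ℝ, 0 < b₀ ∧ ∀ r ∈ Set.Icc (0 : ℝ) R, b₀ ≤ b r ∧ b r ≤ b₁

/-- A weak solution of problem (BP). -/
def isWeakSol (q lam : ℝ) (b : ℝ → ℝ) (f : ℝ → ℝ → ℝ) (w : SpaceA N R) : Prop :=
  w.inK ∧ ∀ φ : SpaceA N R, φ.inK →
    (∫ r in Set.Ioo (0 : ℝ) R, r ^ (N - 1) * w.d r * φ.d r / Real.sqrt (1 - w.d r ^ 2)) =
      ∫ r in Set.Ioo (0 : ℝ) R,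
        r ^ (N - 1) * (lam * b r * |w.u r| ^ (q - 2) * w.u r + f r (w.u r)) * φ.u r

/-- The truncation `f⁺`. -/
def fplus (R : ℝ) (f : ℝ → ℝ → ℝ) (r s : ℝ) : ℝ :=
  if s < 0 then 0
  else if s ≤ R then f r s
  else if s < R + 1 then -(f r R) * (s - R - 1)
  else 0

/-- The truncation `f⁻`. -/
def fminus (R : ℝ) (f : ℝ → ℝ → ℝ) (r s : ℝ) : ℝ :=
  if 0 < s then 0
  else if -R ≤ s then f r s
  else if -R - 1 < s then f r (-R) * (s + R + 1)
  else 0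

/-- The extension `f̂` (equal to `f` for `|s| ≤ R`, linear for `R < |s| < R+1`, `0` beyond). -/
def fhat (R : ℝ) (f : ℝ → ℝ → ℝ) (r s : ℝ) : ℝ :=
  if |s| ≤ R then f r s
  else if R < s ∧ s < R + 1 then f r R * (R + 1 - s)
  else if -(R + 1) < s ∧ s < -R then f r (-R) * (s + R + 1)
  else 0

/-- A weak solution of the modified problem (BP⁺). -/
def isWeakSolPlus (q lam : ℝ) (b : ℝ → ℝ) (f : ℝ → ℝ → ℝ) (w : SpaceA N R) : Prop :=
  w.inK ∧ ∀ φ : SpaceA N R, φ.inK →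
    (∫ r in Set.Ioo (0 : ℝ) R, r ^ (N - 1) * w.d r * φ.d r / Real.sqrt (1 - w.d r ^ 2)) =
      ∫ r in Set.Ioo (0 : ℝ) R,
        r ^ (N - 1) *
          (lam * b r * |w.u r| ^ (q - 2) * max (w.u r) 0 + fplus R f r (w.u r)) * φ.u r

/-- A weak solution of the modified problem (BP⁻). -/
def isWeakSolMinus (q lam : ℝ) (b : ℝ → ℝ) (f : ℝ → ℝ → ℝ) (w : SpaceA N R) : Prop :=
  w.inK ∧ ∀ φ : SpaceA N R, φ.inK →
    (∫ r in Set.Ioo (0 : ℝ) R, r ^ (N - 1) * w.d r * φ.d r / Real.sqrt (1 - w.d r ^ 2)) =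
      ∫ r in Set.Ioo (0 : ℝ) R,
        r ^ (N - 1) *
          (-(lam * b r * |w.u r| ^ (q - 2) * max (-w.u r) 0) + fminus R f r (w.u r)) * φ.u r

/-- The pairing `⟨(F_λ⁺)'(u), z⟩`. -/
def FDplus (q lam : ℝ) (b : ℝ → ℝ) (f : ℝ → ℝ → ℝ) (w : SpaceA N R) (z : ℝ → ℝ) : ℝ :=
  -lam * (∫ r in Set.Ioo (0 : ℝ) R,
      r ^ (N - 1) * b r * |max (w.u r) 0| ^ (q - 2) * max (w.u r) 0 * z r)
    - ∫ r in Set.Ioo (0 : ℝ) R, r ^ (N - 1) * fplus R f r (w.u r) * z r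

/-- The pairing `⟨(F_λ⁻)'(u), z⟩`. -/
def FDminus (q lam : ℝ) (b : ℝ → ℝ) (f : ℝ → ℝ → ℝ) (w : SpaceA N R) (z : ℝ → ℝ) : ℝ :=
  -lam * (∫ r in Set.Ioo (0 : ℝ) R,
      r ^ (N - 1) * b r * |max (-w.u r) 0| ^ (q - 2) * max (-w.u r) 0 * z r)
    - ∫ r in Set.Ioo (0 : ℝ) R, r ^ (N - 1) * fminus R f r (w.u r) * z r

/-- Critical point of `I_λ⁺ = Ψ + F_λ⁺` in the sense of Szulkin. -/
def isCritPlus (q lam : ℝ) (b : ℝ → ℝ) (f : ℝ → ℝ → ℝ) (w : SpaceA N R) : Prop :=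
  w.inK ∧ ∀ v : SpaceA N R, v.inK →
    0 ≤ FDplus q lam b f w (fun r => v.u r - w.u r) + v.PsiR - w.PsiR

/-- Critical point of `I_λ⁻ = Ψ + F_λ⁻` in the sense of Szulkin. -/
def isCritMinus (q lam : ℝ) (b : ℝ → ℝ) (f : ℝ → ℝ → ℝ) (w : SpaceA N R) : Prop :=
  w.inK ∧ ∀ v : SpaceA N R, v.inK →
    0 ≤ FDminus q lam b f w (fun r => v.u r - w.u r) + v.PsiR - w.PsiR

/-- The functional `I_λ⁺` (its real-valued expression, valid on `K`). -/
def IlamPlus (q lam : ℝ) (b : ℝ → ℝ) (f : ℝ → ℝ → ℝ) (w : SpaceA N R) : ℝ :=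
  w.PsiR - (lam / q) * (∫ r in Set.Ioo (0 : ℝ) R, r ^ (N - 1) * b r * |max (w.u r) 0| ^ q)
    - ∫ r in Set.Ioo (0 : ℝ) R, r ^ (N - 1) * Fint (fplus R f) r (w.u r)

/-- The functional `I_λ⁻` (its real-valued expression, valid on `K`). -/
def IlamMinus (q lam : ℝ) (b : ℝ → ℝ) (f : ℝ → ℝ → ℝ) (w : SpaceA N R) : ℝ :=
  w.PsiR - (lam / q) * (∫ r in Set.Ioo (0 : ℝ) R, r ^ (N - 1) * b r * |max (-w.u r) 0| ^ q)
    - ∫ r in Set.Ioo (0 : ℝ) R, r ^ (N - 1) * Fint (fminus R f) r (w.u r)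

/-- The full functional `I_λ` (its real-valued expression, valid on `K`), with `F` the
primitive of the extension `f̂`. -/
def IlamFull (q lam : ℝ) (b : ℝ → ℝ) (f : ℝ → ℝ → ℝ) (w : SpaceA N R) : ℝ :=
  w.PsiR - (lam / q) * (∫ r in Set.Ioo (0 : ℝ) R, r ^ (N - 1) * b r * |w.u r| ^ q)
    - ∫ r in Set.Ioo (0 : ℝ) R, r ^ (N - 1) * Fint (fhat R f) r (w.u r)

/-- The functional `I_λ` with `F` the primitive of `f` itself. -/
def Ilam (q lam : ℝ) (b : ℝ → ℝ) (f : ℝ → ℝ → ℝ) (w : SpaceA N R) : ℝ :=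
  w.PsiR - (lam / q) * (∫ r in Set.Ioo (0 : ℝ) R, r ^ (N - 1) * b r * |w.u r| ^ q)
    - ∫ r in Set.Ioo (0 : ℝ) R, r ^ (N - 1) * Fint f r (w.u r)

-- `g ≥ 0` covers a non-integrable `f`, whose integral is the junk value `0`.
lemma setIntegral_le_of_le_of_nonneg {α : Type*} [MeasurableSpace α] {μ : Measure α}
    {s : Set α} {f g : α → ℝ} (hs : MeasurableSet s) (hg : IntegrableOn g s μ)
    (hg0 : ∀ x ∈ s, 0 ≤ g x) (hfg : ∀ x ∈ s, f x ≤ g x) :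
    ∫ x in s, f x ∂μ ≤ ∫ x in s, g x ∂μ := by
  by_cases hf : IntegrableOn f s μ
  · exact setIntegral_mono_on hf hg hs hfg
  · rw [integral_undef hf]
    exact setIntegral_nonneg hs hg0

lemma setIntegral_Ioo_id {a : ℝ} (ha : 0 ≤ a) : ∫ r in Ioo 0 a, r = a ^ 2 / 2 := by
  rw [← integral_Ioc_eq_integral_Ioo, ← intervalIntegral.integral_of_le ha, integral_id]
  ring

lemma setIntegral_Ioo_inv_pow_succ_le {n : ℕ} (hn : n ≠ 0) {r R : ℝ} (hr : 0 < r)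
    (hrR : r ≤ R) : ∫ t in Ioo r R, (t ^ (n + 1))⁻¹ ≤ (n * r ^ n)⁻¹ := by
  have hzpow : ∫ t in Ioo r R, (t ^ (n + 1))⁻¹ = ∫ t in r..R, t ^ (-(n + 1 : ℤ)) := by
    rw [intervalIntegral.integral_of_le hrR, integral_Ioc_eq_integral_Ioo]
    simp only [zpow_neg]
    norm_cast
  have h0 : (0 : ℝ) ∉ uIcc r R := by
    rw [uIcc_of_le hrR]
    exact fun h => h.1.not_gt hr
  rw [hzpow, integral_zpow (Or.inr ⟨by omega, h0⟩)]
  have hR : 0 < R := hr.trans_le hrR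
  have hn' : (0 : ℝ) < n := by positivity
  rw [show -(n + 1 : ℤ) + 1 = -(n : ℤ) by ring, zpow_neg, zpow_neg, zpow_natCast, zpow_natCast]
  push_cast
  rw [show -((n : ℝ) + 1) + 1 = -n by ring, mul_inv, div_neg, ← neg_div, neg_sub,
    div_eq_mul_inv, mul_comm]
  gcongr
  exact sub_le_self _ (by positivity)

lemma setIntegral_pow_mul_rpow_le {n : ℕ} {R q b₁ : ℝ} {b v : ℝ → ℝ} (hR : 0 ≤ R) (hq : 0 ≤ q)
    (hb₁ : 0 ≤ b₁) (hb : ∀ r ∈ Ioo 0 R, 0 ≤ b r ∧ b r ≤ b₁) (hv : ∀ r ∈ Ioo 0 R, |v r| ≤ R) :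
    ∫ r in Ioo 0 R, r ^ n * b r * |v r| ^ q ≤ R * (R ^ n * b₁ * R ^ q) := by
  have hconst : ∫ _ in Ioo (0 : ℝ) R, R ^ n * b₁ * R ^ q = R * (R ^ n * b₁ * R ^ q) := by
    rw [setIntegral_const, Real.volume_real_Ioo_of_le hR, sub_zero, smul_eq_mul]
  rw [← hconst]
  refine setIntegral_le_of_le_of_nonneg measurableSet_Ioo
    (integrableOn_const measure_Ioo_lt_top.ne) (fun _ _ => by positivity) fun r hr => ?_
  have hr0 := hr.1.le
  obtain ⟨hb0, hb1⟩ := hb r hr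
  gcongr
  exacts [hr.2.le, hv r hr]

lemma abs_le_mul_sq_div_add {a p c : ℝ} (hp : 0 < p) (hc : 0 < c) :
    |a| ≤ p * a ^ 2 / (2 * c) + c / (2 * p) := by
  rw [div_add_div _ _ (by positivity) (by positivity), le_div_iff₀ (by positivity)]
  have h := two_mul_le_add_sq (p * |a|) c
  rw [mul_pow, sq_abs] at h
  nlinarith

lemma sq_div_two_le_one_sub_sqrt {x : ℝ} (hx : x ^ 2 ≤ 2) : x ^ 2 / 2 ≤ 1 - √(1 - x ^ 2) := by
  have h : √(1 - x ^ 2) ≤ 1 - x ^ 2 / 2 :=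
    Real.sqrt_le_iff.2 ⟨by linarith, by nlinarith [sq_nonneg (x ^ 2)]⟩
  linarith

lemma one_sub_sqrt_le_sq (x : ℝ) : 1 - √(1 - x ^ 2) ≤ x ^ 2 := by
  rcases le_total (1 - x ^ 2) 0 with h | h
  · rw [Real.sqrt_eq_zero_of_nonpos h]
    linarith
  · have : 1 - x ^ 2 ≤ √(1 - x ^ 2) :=
      Real.le_sqrt_of_sq_le (by nlinarith [sq_nonneg x])
    linarith

lemma exists_pos_mul_sq_le (a : ℝ) {b : ℝ} (hb : 0 < b) : ∃ t > 0, a * t ^ 2 ≤ b := by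
  refine ⟨√(b / (|a| + 1)), by positivity, ?_⟩
  rw [Real.sq_sqrt (by positivity), mul_div_assoc', div_le_iff₀ (by positivity)]
  nlinarith [le_abs_self a]

lemma abs_Fint_le {g : ℝ → ℝ → ℝ} {r s C : ℝ} (h : ∀ t, t ≠ 0 → |t| ≤ |s| → |g r t| ≤ C) :
    |Fint g r s| ≤ C * |s| := by
  have h' := intervalIntegral.norm_integral_le_of_norm_le_const_ae (a := 0) (b := s) (C := C)
    (f := g r) <| by
    filter_upwards [Measure.ae_ne volume 0] with t ht hts
    simpa using h t ht (by simpa using abs_sub_left_of_mem_uIcc (uIoc_subset_uIcc hts))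
  simpa [Fint] using h'

lemma abs_fplus_le {f : ℝ → ℝ → ℝ} {r t : ℝ} (ht : t ≤ R) : |fplus R f r t| ≤ |f r t| := by
  unfold fplus
  split_ifs <;> simp

lemma abs_fminus_le {f : ℝ → ℝ → ℝ} {r t : ℝ} (ht : -R ≤ t) : |fminus R f r t| ≤ |f r t| := by
  unfold fminus
  split_ifs <;> simp

lemma exists_abs_le_mul_abs_of_hypF2 {f : ℝ → ℝ → ℝ} (hF2 : hypF2 R f) (hR : 0 < R) {ε : ℝ}
    (hε : 0 < ε) :
    ∃ δ > 0, δ ≤ R ∧ ∀ r ∈ Ioo 0 R, ∀ s, s ≠ 0 → |s| ≤ δ → |f r s| ≤ ε * |s| := by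
  obtain ⟨δ₀, hδ₀, hf⟩ := hF2 ε hε
  refine ⟨min (δ₀ / 2) R, by positivity, min_le_right _ _, fun r hr s hs hsδ => ?_⟩
  have h := hf r (Ioo_subset_Icc_self hr) s hs (hsδ.trans_lt ((min_le_left _ _).trans_lt
    (half_lt_self hδ₀)))
  rw [abs_div, div_lt_iff₀ (abs_pos.2 hs)] at h
  exact h.le

namespace SpaceA

variable {w : SpaceA N R}

lemma normSq_nonneg (w : SpaceA N R) : 0 ≤ w.normSq :=
  setIntegral_nonneg measurableSet_Ioo fun _ hr => mul_nonneg (pow_nonneg hr.1.le _) (sq_nonneg _)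

lemma aestronglyMeasurable_d (w : SpaceA N R) :
    AEStronglyMeasurable w.d (volume.restrict (Ioc 0 R)) := by
  refine (measurable_deriv w.u).aestronglyMeasurable.congr ?_
  filter_upwards [ae_restrict_mem measurableSet_Ioc] with r hr
  exact (w.hasDeriv r hr).deriv

lemma integrableOn_d (hK : w.inK) {r : ℝ} (hr : 0 < r) : IntegrableOn w.d (Ioo r R) := by
  refine (integrable_const (1 : ℝ)).mono'
    (w.aestronglyMeasurable_d.mono_set (Ioo_subset_Ioc_self.trans (Ioc_subset_Ioc_left hr.le))) ?_
  filter_upwards [ae_restrict_mem measurableSet_Ioo] with t ht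
  exact hK t ⟨hr.trans ht.1, ht.2⟩

lemma u_eq_neg_integral_d (hK : w.inK) {r : ℝ} (hr : r ∈ Ioo 0 R) :
    w.u r = -∫ t in r..R, w.d t := by
  have hint : IntervalIntegrable w.d volume r R := by
    rw [intervalIntegrable_iff_integrableOn_Ioo_of_le hr.2.le]
    exact integrableOn_d hK hr.1
  rw [intervalIntegral.integral_eq_sub_of_hasDerivAt (f := w.u) (fun t ht => ?_) hint, w.boundary]
  · ring
  rw [uIcc_of_le hr.2.le] at ht
  exact w.hasDeriv t ⟨hr.1.trans_le ht.1, ht.2⟩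

lemma abs_u_le_setIntegral (hK : w.inK) {r : ℝ} (hr : r ∈ Ioo 0 R) {g : ℝ → ℝ}
    (hg : IntegrableOn g (Ioo r R)) (hdg : ∀ t ∈ Ioo r R, |w.d t| ≤ g t) :
    |w.u r| ≤ ∫ t in Ioo r R, g t := by
  rw [u_eq_neg_integral_d hK hr, abs_neg, intervalIntegral.integral_of_le hr.2.le,
    integral_Ioc_eq_integral_Ioo, ← Real.norm_eq_abs]
  refine norm_integral_le_of_norm_le hg ?_
  filter_upwards [ae_restrict_mem measurableSet_Ioo] with t ht
  exact hdg t ht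

lemma abs_u_le (hK : w.inK) {r : ℝ} (hr : r ∈ Ioo 0 R) : |w.u r| ≤ R := by
  have h := abs_u_le_setIntegral hK hr (integrableOn_const measure_Ioo_lt_top.ne)
    fun t ht => hK t ⟨hr.1.trans ht.1, ht.2⟩
  rw [setIntegral_const, Real.volume_real_Ioo_of_le hr.2.le, smul_eq_mul, mul_one] at h
  linarith [hr.1]

lemma abs_u_le_div_add (hN : 3 ≤ N) (hK : w.inK) {r : ℝ} (hr : r ∈ Ioo 0 R) {c : ℝ}
    (hc : 0 < c) :
    |w.u r| ≤ w.normSq / (2 * c) + c / (2 * (((N : ℝ) - 2) * r ^ (N - 2))) := by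
  have hIoo : Ioo r R ⊆ Ioo 0 R := Ioo_subset_Ioo_left hr.1.le
  have hint₁ : IntegrableOn (fun t => t ^ (N - 1) * w.d t ^ 2 / (2 * c)) (Ioo r R) :=
    (w.sq_integrable.mono_set hIoo).div_const _
  have hint₂ : IntegrableOn (fun t => c / 2 * (t ^ (N - 1))⁻¹) (Ioo r R) := by
    refine (ContinuousOn.integrableOn_Icc ?_).mono_set Ioo_subset_Icc_self
    exact continuousOn_const.mul <| (continuousOn_pow _).inv₀ fun t ht =>
      (pow_pos (hr.1.trans_le ht.1) _).ne'
  have hsq : ∫ t in Ioo r R, t ^ (N - 1) * w.d t ^ 2 ≤ w.normSq :=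
    setIntegral_mono_set w.sq_integrable
      (ae_restrict_of_forall_mem measurableSet_Ioo fun t ht =>
        mul_nonneg (pow_nonneg ht.1.le _) (sq_nonneg _)) hIoo.eventuallyLE
  have hinv : ∫ t in Ioo r R, (t ^ (N - 1))⁻¹ ≤ (((N : ℝ) - 2) * r ^ (N - 2))⁻¹ := by
    have h := setIntegral_Ioo_inv_pow_succ_le (n := N - 2) (by omega) hr.1 hr.2.le
    rwa [show N - 2 + 1 = N - 1 by omega, Nat.cast_sub (by omega), Nat.cast_ofNat] at h
  calc |w.u r| ≤ ∫ t in Ioo r R, (t ^ (N - 1) * w.d t ^ 2 / (2 * c) + c / 2 * (t ^ (N - 1))⁻¹) :=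
        abs_u_le_setIntegral hK hr (hint₁.add hint₂) fun t ht => by
          have := abs_le_mul_sq_div_add (a := w.d t) (pow_pos (hr.1.trans ht.1) (N - 1)) hc
          exact this.trans_eq (by ring)
    _ ≤ w.normSq / (2 * c) + c / 2 * (((N : ℝ) - 2) * r ^ (N - 2))⁻¹ := by
        rw [integral_add hint₁ hint₂, integral_div, integral_const_mul]
        gcongr
    _ = _ := by rw [← div_eq_mul_inv, div_div]

lemma sq_u_mul_le_normSq (hN : 3 ≤ N) (hK : w.inK) {r : ℝ} (hr : r ∈ Ioo 0 R) :
    w.u r ^ 2 * (((N : ℝ) - 2) * r ^ (N - 2)) ≤ w.normSq := by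
  set X := ((N : ℝ) - 2) * r ^ (N - 2)
  have hX : 0 < X := mul_pos (by rify at hN; linarith) (pow_pos hr.1 _)
  rcases (abs_nonneg (w.u r)).eq_or_lt with h0 | hpos
  · rw [← sq_abs, ← h0]
    simpa using w.normSq_nonneg
  -- the choice `c = |u r| X` optimises the bound of `abs_u_le_div_add`
  have h := abs_u_le_div_add hN hK hr (mul_pos hpos hX)
  rw [mul_div_mul_right _ _ hX.ne'] at h
  have hhalf : |w.u r| / 2 * (2 * (|w.u r| * X)) ≤ w.normSq :=
    (le_div_iff₀ (by positivity)).1 (by linarith)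
  calc w.u r ^ 2 * X = |w.u r| / 2 * (2 * (|w.u r| * X)) := by rw [← sq_abs]; ring
    _ ≤ w.normSq := hhalf

lemma integrableOn_PsiR_integrand (hK : w.inK) :
    IntegrableOn (fun r => r ^ (N - 1) * (1 - √(1 - w.d r ^ 2))) (Ioo 0 R) := by
  have hd := w.aestronglyMeasurable_d.mono_set Ioo_subset_Ioc_self
  refine w.sq_integrable.mono' ?_ ?_
  · exact (continuous_pow _).aestronglyMeasurable.mul (aestronglyMeasurable_const.sub
      (Real.continuous_sqrt.comp_aestronglyMeasurable (aestronglyMeasurable_const.sub (hd.pow 2))))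
  filter_upwards [ae_restrict_mem measurableSet_Ioo] with r hr
  have hd1 : w.d r ^ 2 ≤ 2 := by nlinarith [sq_abs (w.d r), abs_nonneg (w.d r), hK r hr]
  have hlow := sq_div_two_le_one_sub_sqrt hd1
  rw [Real.norm_eq_abs, abs_of_nonneg (mul_nonneg (pow_nonneg hr.1.le _)
    ((div_nonneg (sq_nonneg _) zero_le_two).trans hlow))]
  exact mul_le_mul_of_nonneg_left (one_sub_sqrt_le_sq _) (pow_nonneg hr.1.le _)

lemma half_normSq_le_PsiR (hK : w.inK) : w.normSq / 2 ≤ w.PsiR := by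
  rw [normSq, PsiR, ← integral_div]
  refine setIntegral_mono_on (w.sq_integrable.div_const _) (integrableOn_PsiR_integrand hK)
    measurableSet_Ioo fun r hr => ?_
  have hd1 : w.d r ^ 2 ≤ 2 := by nlinarith [sq_abs (w.d r), abs_nonneg (w.d r), hK r hr]
  rw [mul_div_assoc]
  exact mul_le_mul_of_nonneg_left (sq_div_two_le_one_sub_sqrt hd1) (pow_nonneg hr.1.le _)

lemma abs_u_le_or_lt_of_normSq_le (hN : 3 ≤ N) (hK : w.inK) {δ t : ℝ} (hδ : 0 ≤ δ)
    (ht : 0 ≤ t) (hw : w.normSq ≤ δ ^ 2 * (((N : ℝ) - 2) * t ^ (N - 2))) {r : ℝ}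
    (hr : r ∈ Ioo 0 R) :
    |w.u r| ≤ δ ∨ r < t ∧ δ ^ 2 * (((N : ℝ) - 2) * r ^ (N - 2)) < w.normSq := by
  have hN2 : (0 : ℝ) < (N : ℝ) - 2 := by rify at hN; linarith
  rcases le_or_gt w.normSq (δ ^ 2 * (((N : ℝ) - 2) * r ^ (N - 2))) with hsmall | hbig
  · have hX : 0 < ((N : ℝ) - 2) * r ^ (N - 2) := mul_pos hN2 (pow_pos hr.1 _)
    refine .inl (abs_le_of_sq_le_sq ?_ hδ)
    exact le_of_mul_le_mul_right ((sq_u_mul_le_normSq hN hK hr).trans hsmall) hX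
  · refine .inr ⟨(pow_lt_pow_iff_left₀ hr.1.le ht (by omega : N - 2 ≠ 0)).1 ?_, hbig⟩
    exact lt_of_mul_lt_mul_left (lt_of_mul_lt_mul_left (hbig.trans_le hw) (sq_nonneg δ)) hN2.le

lemma pow_mul_le_of_normSq_le (hN : 3 ≤ N) (hK : w.inK) {Φ : ℝ → ℝ} {M ε δ t : ℝ}
    (hM : 0 ≤ M) (hε : 0 ≤ ε) (hδ : 0 < δ) (ht : 0 ≤ t)
    (hΦ_bdd : ∀ s, |s| ≤ R → Φ s ≤ M) (hΦ_small : ∀ s, |s| ≤ δ → Φ s ≤ ε * s ^ 2)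
    (hw : w.normSq ≤ δ ^ 2 * (((N : ℝ) - 2) * t ^ (N - 2))) {r : ℝ} (hr : r ∈ Ioo 0 R) :
    r ^ (N - 1) * Φ (w.u r) ≤
      w.normSq / ((N : ℝ) - 2) * (ε * r + M / δ ^ 2 * (Iio t).indicator id r) := by
  have hN2 : (0 : ℝ) < (N : ℝ) - 2 := by rify at hN; linarith
  have hpow : r ^ (N - 1) = r ^ (N - 2) * r := by rw [← pow_succ]; congr 1; omega
  have hr0 : 0 < r := hr.1
  have hnorm := w.normSq_nonneg
  rcases abs_u_le_or_lt_of_normSq_le hN hK hδ.le ht hw hr with huδ | ⟨hrt, hbig⟩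
  · have hHardy := sq_u_mul_le_normSq hN hK hr
    have hind : 0 ≤ (Iio t).indicator id r := indicator_nonneg (fun _ _ => hr0.le) r
    calc r ^ (N - 1) * Φ (w.u r) ≤ r ^ (N - 1) * (ε * w.u r ^ 2) :=
          mul_le_mul_of_nonneg_left (hΦ_small _ huδ) (by positivity)
      _ = ε * r * (w.u r ^ 2 * r ^ (N - 2)) := by rw [hpow]; ring
      _ ≤ ε * r * (w.normSq / ((N : ℝ) - 2)) := by
          gcongr
          rw [le_div_iff₀ hN2]
          linarith
      _ = w.normSq / ((N : ℝ) - 2) * (ε * r) := by ring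
      _ ≤ _ := by
          gcongr
          exact le_add_of_nonneg_right (mul_nonneg (by positivity) hind)
  · rw [indicator_of_mem (show r ∈ Iio t from hrt), id]
    calc r ^ (N - 1) * Φ (w.u r) ≤ r ^ (N - 1) * M :=
          mul_le_mul_of_nonneg_left (hΦ_bdd _ (abs_u_le hK hr)) (by positivity)
      _ = M * r * r ^ (N - 2) := by rw [hpow]; ring
      _ ≤ M * r * (w.normSq / (δ ^ 2 * ((N : ℝ) - 2))) := by
          gcongr
          rw [le_div_iff₀ (by positivity)]
          linarith
      _ = w.normSq / ((N : ℝ) - 2) * (M / δ ^ 2 * r) := by field_simp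
      _ ≤ _ := by
          gcongr
          exact le_add_of_nonneg_left (by positivity)

lemma integral_pow_mul_le (hN : 3 ≤ N) (hR : 0 ≤ R) (hK : w.inK) {Φ : ℝ → ℝ → ℝ}
    {M ε δ t : ℝ} (hM : 0 ≤ M) (hε : 0 ≤ ε) (hδ : 0 < δ) (ht : 0 ≤ t)
    (hΦ_bdd : ∀ r ∈ Ioo 0 R, ∀ s, |s| ≤ R → Φ r s ≤ M)
    (hΦ_small : ∀ r ∈ Ioo 0 R, ∀ s, |s| ≤ δ → Φ r s ≤ ε * s ^ 2)
    (hw : w.normSq ≤ δ ^ 2 * (((N : ℝ) - 2) * t ^ (N - 2))) :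
    ∫ r in Ioo 0 R, r ^ (N - 1) * Φ r (w.u r) ≤
      w.normSq / ((N : ℝ) - 2) * (ε * (R ^ 2 / 2) + M / δ ^ 2 * (t ^ 2 / 2)) := by
  have hN2 : (0 : ℝ) < (N : ℝ) - 2 := by rify at hN; linarith
  have hid : IntegrableOn (fun r => r) (Ioo (0 : ℝ) R) :=
    continuous_id.integrableOn_Icc.mono_set Ioo_subset_Icc_self
  have hind : IntegrableOn ((Iio t).indicator id) (Ioo (0 : ℝ) R) :=
    hid.indicator measurableSet_Iio
  have hint : IntegrableOn (fun r => ε * r + M / δ ^ 2 * (Iio t).indicator id r) (Ioo 0 R) :=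
    (hid.const_mul ε).add (hind.const_mul _)
  have hind_le : ∫ r in Ioo 0 R, (Iio t).indicator id r ≤ t ^ 2 / 2 := by
    rw [setIntegral_indicator measurableSet_Iio, Ioo_inter_Iio]
    simp only [id]
    rw [setIntegral_Ioo_id (le_min hR ht)]
    gcongr
    exact min_le_right _ _
  calc ∫ r in Ioo 0 R, r ^ (N - 1) * Φ r (w.u r)
      ≤ ∫ r in Ioo 0 R, w.normSq / ((N : ℝ) - 2) *
          (ε * r + M / δ ^ 2 * (Iio t).indicator id r) :=
        setIntegral_le_of_le_of_nonneg measurableSet_Ioo (hint.const_mul _)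
          (fun r hr => mul_nonneg (div_nonneg w.normSq_nonneg hN2.le) (add_nonneg
            (mul_nonneg hε hr.1.le)
            (mul_nonneg (by positivity) (indicator_nonneg (fun _ _ => hr.1.le) r))))
          fun r hr => pow_mul_le_of_normSq_le hN hK hM hε hδ ht (hΦ_bdd r hr) (hΦ_small r hr) hw hr
    _ ≤ _ := by
        rw [integral_const_mul, integral_add (hid.const_mul ε) (hind.const_mul _),
          integral_const_mul, integral_const_mul, setIntegral_Ioo_id hR]
        have := w.normSq_nonneg
        gcongr

lemma three_eighths_normSq_sub_le (hN : 3 ≤ N) (hR : 0 < R) (hK : w.inK)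
    {q lam b₁ M ε δ t : ℝ} {b φ : ℝ → ℝ} {f g : ℝ → ℝ → ℝ}
    (hq : 0 < q) (hlam : 0 ≤ lam) (hb₁ : 0 ≤ b₁) (hb : ∀ r ∈ Ioo 0 R, 0 ≤ b r ∧ b r ≤ b₁)
    (hφ : ∀ s, |φ s| ≤ |s|) (hg : ∀ r s, |s| ≤ R → |g r s| ≤ |f r s|)
    (hf_bdd : ∀ r ∈ Ioo 0 R, ∀ s, |s| ≤ R → |f r s| ≤ M)
    (hf_small : ∀ r ∈ Ioo 0 R, ∀ s, s ≠ 0 → |s| ≤ δ → |f r s| ≤ ε * |s|)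
    (hε : 0 ≤ ε) (hεR : 8 * ε * R ^ 2 ≤ (N : ℝ) - 2) (hδ : 0 < δ) (hδR : δ ≤ R) (ht : 0 ≤ t)
    (htM : 8 * (M * R) * t ^ 2 ≤ δ ^ 2 * ((N : ℝ) - 2))
    (hw : w.normSq ≤ δ ^ 2 * (((N : ℝ) - 2) * t ^ (N - 2))) :
    3 / 8 * w.normSq - R * (R ^ (N - 1) * b₁ * R ^ q) / q * lam ≤
      w.PsiR - lam / q * (∫ r in Ioo 0 R, r ^ (N - 1) * b r * |φ (w.u r)| ^ q)
        - ∫ r in Ioo 0 R, r ^ (N - 1) * Fint g r (w.u r) := by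
  have hN2 : (0 : ℝ) < (N : ℝ) - 2 := by rify at hN; linarith
  have hM : 0 ≤ M :=
    (abs_nonneg _).trans (hf_bdd (R / 2) ⟨by positivity, by linarith⟩ 0 (by simpa using hR.le))
  have hQ : lam / q * (∫ r in Ioo 0 R, r ^ (N - 1) * b r * |φ (w.u r)| ^ q) ≤
      R * (R ^ (N - 1) * b₁ * R ^ q) / q * lam := by
    calc lam / q * (∫ r in Ioo 0 R, r ^ (N - 1) * b r * |φ (w.u r)| ^ q)
        ≤ lam / q * (R * (R ^ (N - 1) * b₁ * R ^ q)) :=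
          mul_le_mul_of_nonneg_left (setIntegral_pow_mul_rpow_le hR.le hq.le hb₁ hb
            fun r hr => (hφ _).trans (abs_u_le hK hr)) (div_nonneg hlam hq.le)
      _ = _ := by ring
  have hF := integral_pow_mul_le hN hR.le hK (Φ := Fint g) (M := M * R) (ε := ε)
    (mul_nonneg hM hR.le) hε hδ ht
    (fun r hr s hs => (le_abs_self _).trans <| (abs_Fint_le fun τ _ hτ =>
      (hg r τ (hτ.trans hs)).trans (hf_bdd r hr τ (hτ.trans hs))).trans
        (mul_le_mul_of_nonneg_left hs hM))
    (fun r hr s hs => (le_abs_self _).trans <| (abs_Fint_le fun τ hτ0 hτ =>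
      (hg r τ (hτ.trans (hs.trans hδR))).trans ((hf_small r hr τ hτ0 (hτ.trans hs)).trans
        (mul_le_mul_of_nonneg_left hτ hε))).trans_eq (by rw [mul_assoc, ← sq, sq_abs]))
    hw
  have hcoef : ε * (R ^ 2 / 2) + M * R / δ ^ 2 * (t ^ 2 / 2) ≤ ((N : ℝ) - 2) / 8 := by
    have h : M * R / δ ^ 2 * (t ^ 2 / 2) ≤ ((N : ℝ) - 2) / 16 := by
      rw [div_mul_eq_mul_div, div_le_div_iff₀ (by positivity) (by positivity)]
      nlinarith
    linarith
  have hF' : ∫ r in Ioo 0 R, r ^ (N - 1) * Fint g r (w.u r) ≤ w.normSq / 8 := by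
    refine hF.trans ?_
    calc w.normSq / ((N : ℝ) - 2) * (ε * (R ^ 2 / 2) + M * R / δ ^ 2 * (t ^ 2 / 2))
        ≤ w.normSq / ((N : ℝ) - 2) * (((N : ℝ) - 2) / 8) := by
          have := w.normSq_nonneg
          gcongr
      _ = w.normSq / 8 := by field_simp
  linarith [half_normSq_le_PsiR hK]

end SpaceA

lemma mountain_pass_of_lower_bound {I J : ℝ → SpaceA N R → ℝ} {ρ κ : ℝ}
    (hρ : 0 < ρ) (hκ : 0 < κ)
    (h : ∀ lam, 0 < lam → ∀ w : SpaceA N R, w.inK → w.normSq ≤ ρ ^ 2 →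
      3 / 8 * w.normSq - κ * lam ≤ I lam w ∧ 3 / 8 * w.normSq - κ * lam ≤ J lam w) :
    ∃ lamStar : ℝ, 0 < lamStar ∧ ∃ ρp : ℝ, 0 < ρp ∧ ∃ ρm : ℝ → ℝ,
      (∀ lam : ℝ, 0 < lam → lam < lamStar →
        (∀ w : SpaceA N R, w.inK → Real.sqrt w.normSq = ρp →
          ρp ^ 2 / 8 ≤ I lam w ∧ ρp ^ 2 / 8 ≤ J lam w) ∧
        0 < ρm lam ∧ ρm lam < ρp ∧
        (∀ w : SpaceA N R, w.inK → ρm lam ≤ Real.sqrt w.normSq →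
          Real.sqrt w.normSq ≤ ρp →
          ρm lam ^ 2 / 8 ≤ I lam w ∧ ρm lam ^ 2 / 8 ≤ J lam w)) ∧
      Filter.Tendsto ρm (nhdsWithin 0 (Set.Ioi 0)) (nhds 0) := by
  have hannulus : ∀ lam, 0 < lam → ∀ w : SpaceA N R, w.inK → 4 * κ * lam ≤ w.normSq →
      w.normSq ≤ ρ ^ 2 → w.normSq / 8 ≤ I lam w ∧ w.normSq / 8 ≤ J lam w := by
    intro lam hlam w hK hlo hhi
    obtain ⟨hI, hJ⟩ := h lam hlam w hK hhi
    constructor <;> linarith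
  refine ⟨ρ ^ 2 / (4 * κ), by positivity, ρ, hρ, fun lam => √(4 * κ * lam),
    fun lam hlam hlt => ?_, ?_⟩
  · have hlt' : 4 * κ * lam < ρ ^ 2 := by rwa [lt_div_iff₀ (by positivity), mul_comm] at hlt
    have hsq : √(4 * κ * lam) ^ 2 = 4 * κ * lam := Real.sq_sqrt (by positivity)
    refine ⟨fun w hK hw => ?_, Real.sqrt_pos.2 (by positivity),
      (Real.sqrt_lt' hρ).2 hlt', fun w hK hlo hhi => ?_⟩
    · have hw' : w.normSq = ρ ^ 2 := by rw [← hw, Real.sq_sqrt w.normSq_nonneg]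
      rw [← hw']
      exact hannulus lam hlam w hK (hw' ▸ hlt'.le) hw'.le
    · have hlo' := (Real.sqrt_le_sqrt_iff w.normSq_nonneg).1 hlo
      obtain ⟨hI, hJ⟩ := hannulus lam hlam w hK hlo' (Real.sqrt_le_iff.1 hhi).2
      rw [hsq]
      constructor <;> linarith
  · have hc : Continuous fun lam : ℝ => √(4 * κ * lam) := by fun_prop
    simpa using (hc.tendsto 0).mono_left nhdsWithin_le_nhds

theorem mountain_pass_geometry_general
    (N : ℕ) (hN : 3 ≤ N) (R : ℝ) (hR : 0 < R) (q : ℝ) (hq1 : 1 < q)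
    (f : ℝ → ℝ → ℝ) (b : ℝ → ℝ)
    (hF1 : hypF1 R f) (hF2 : hypF2 R f) (hB : hypB R b) :
    ∃ lamStar : ℝ, 0 < lamStar ∧ ∃ ρp : ℝ, 0 < ρp ∧ ∃ ρm : ℝ → ℝ,
      (∀ lam : ℝ, 0 < lam → lam < lamStar →
        (∀ w : SpaceA N R, w.inK → Real.sqrt w.normSq = ρp →
          ρp ^ 2 / 8 ≤ IlamPlus q lam b f w ∧ ρp ^ 2 / 8 ≤ IlamMinus q lam b f w) ∧
        0 < ρm lam ∧ ρm lam < ρp ∧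
        (∀ w : SpaceA N R, w.inK → ρm lam ≤ Real.sqrt w.normSq →
          Real.sqrt w.normSq ≤ ρp →
          ρm lam ^ 2 / 8 ≤ IlamPlus q lam b f w ∧
          ρm lam ^ 2 / 8 ≤ IlamMinus q lam b f w)) ∧
      Filter.Tendsto ρm (nhdsWithin 0 (Set.Ioi 0)) (nhds 0) := by
  have hN2 : (0 : ℝ) < (N : ℝ) - 2 := by rify at hN; linarith
  obtain ⟨-, b₀, b₁, hb₀, hb⟩ := hB
  have hb₁ : 0 < b₁ := hb₀.trans_le ((hb 0 ⟨le_rfl, hR.le⟩).1.trans (hb 0 ⟨le_rfl, hR.le⟩).2)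
  have hb' : ∀ r ∈ Ioo 0 R, 0 ≤ b r ∧ b r ≤ b₁ := fun r hr =>
    ⟨hb₀.le.trans (hb r (Ioo_subset_Icc_self hr)).1, (hb r (Ioo_subset_Icc_self hr)).2⟩
  obtain ⟨M, hM⟩ := (isCompact_Icc.prod isCompact_Icc).exists_bound_of_continuousOn hF1
  have hf_bdd : ∀ r ∈ Ioo 0 R, ∀ s, |s| ≤ R → |f r s| ≤ M := fun r hr s hs =>
    hM (r, s) ⟨Ioo_subset_Icc_self hr, abs_le.1 hs⟩
  obtain ⟨δ, hδ, hδR, hf_small⟩ :=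
    exists_abs_le_mul_abs_of_hypF2 hF2 hR (ε := ((N : ℝ) - 2) / (8 * R ^ 2)) (by positivity)
  have hεR : 8 * (((N : ℝ) - 2) / (8 * R ^ 2)) * R ^ 2 ≤ (N : ℝ) - 2 := le_of_eq (by field_simp)
  obtain ⟨t, ht, htM⟩ := exists_pos_mul_sq_le (8 * (M * R)) (b := δ ^ 2 * ((N : ℝ) - 2))
    (by positivity)
  refine mountain_pass_of_lower_bound (ρ := √(δ ^ 2 * (((N : ℝ) - 2) * t ^ (N - 2))))
    (κ := R * (R ^ (N - 1) * b₁ * R ^ q) / q) (by positivity) (by positivity)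
    fun lam hlam w hK hw => ?_
  rw [Real.sq_sqrt (by positivity)] at hw
  exact ⟨SpaceA.three_eighths_normSq_sub_le hN hR hK (by linarith) hlam.le hb₁.le hb'
      (φ := fun s => max s 0) (fun s => (abs_of_nonneg (le_max_right _ _)).trans_le
        (max_le (le_abs_self s) (abs_nonneg s)))
      (fun _ _ hs => abs_fplus_le (abs_le.1 hs).2) hf_bdd hf_small (by positivity) hεR hδ hδR
      ht.le htM hw,
    SpaceA.three_eighths_normSq_sub_le hN hR hK (by linarith) hlam.le hb₁.le hb'
      (φ := fun s => max (-s) 0) (fun s => (abs_of_nonneg (le_max_right _ _)).trans_le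
        (max_le (neg_le_abs s) (abs_nonneg s)))
      (fun _ _ hs => abs_fminus_le (abs_le.1 hs).1) hf_bdd hf_small (by positivity) hεR hδ hδR
      ht.le htM hw⟩

/-- Mountain pass geometry: the functionals `I_λ^±` are bounded below by positive constants
on the annulus `ρ₋(λ,R) ≤ ‖u‖ ≤ ρ₊(R)`, and `ρ₋(λ,R) → 0` as `λ → 0⁺`. -/
theorem mountain_pass_geometry
    (N : ℕ) (hN : 3 ≤ N) (R : ℝ) (hR : 0 < R) (q : ℝ) (hq1 : 1 < q) (hq2 : q < 2)
    (f : ℝ → ℝ → ℝ) (b : ℝ → ℝ)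
    (hF1 : hypF1 R f) (hF2 : hypF2 R f) (hF3 : hypF3 R f) (hB : hypB R b) :
    ∃ lamStar : ℝ, 0 < lamStar ∧ ∃ ρp : ℝ, 0 < ρp ∧ ∃ ρm : ℝ → ℝ,
      (∀ lam : ℝ, 0 < lam → lam < lamStar →
        (∀ w : SpaceA N R, w.inK → Real.sqrt w.normSq = ρp →
          ρp ^ 2 / 8 ≤ IlamPlus q lam b f w ∧ ρp ^ 2 / 8 ≤ IlamMinus q lam b f w) ∧
        0 < ρm lam ∧ ρm lam < ρp ∧
        (∀ w : SpaceA N R, w.inK → ρm lam ≤ Real.sqrt w.normSq →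
          Real.sqrt w.normSq ≤ ρp →
          ρm lam ^ 2 / 8 ≤ IlamPlus q lam b f w ∧
          ρm lam ^ 2 / 8 ≤ IlamMinus q lam b f w)) ∧
      Filter.Tendsto ρm (nhdsWithin 0 (Set.Ioi 0)) (nhds 0) :=
  mountain_pass_geometry_general N hN R hR q hq1 f b hF1 hF2 hB
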